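/- arXiv:1304.1708 — 5 statements merged into one kernel-verified Lean document; each statement's English description precedes it below -/
import Mathlib

section
/- Let p ≥ 2, e ≥ 1, and 2 ≤ l ≤ p^e with p-adic expansion l - 1 = l_0 + l_1 p + ⋯ + l_{e-1} p^{e-1} (0 ≤ l_k ≤ p-1). Define v_i(l) = l·w_i(p^e) − p^e·w_i(l) where w_i(m) = ⌊(m-1)/p^{i-1}⌋ − ⌊(m-1)/p^i⌋. Then for every 1 ≤ j ≤ e, the partial sum ∑_{i=1}^{j} v_i(l) equals p^e − p^{e-j}(1 + ∑_{k=0}^{j-1} l_k p^k); in particular this sum is nonnegative. -/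
/-- `w p i m = ⌊(m-1)/p^(i-1)⌋ - ⌊(m-1)/p^i⌋` (natural floor division). -/
def w (p i m : ℕ) : ℕ := (m - 1) / p ^ (i - 1) - (m - 1) / p ^ i

/-- `v p e i l = l·w_i(p^e) − p^e·w_i(l)` as an integer. -/
def v (p e i l : ℕ) : ℤ := (l : ℤ) * (w p i (p ^ e) : ℤ) - (p : ℤ) ^ e * (w p i l : ℤ)

/-!
The sum of `w_i(m)` over `1 ≤ i ≤ j` telescopes to `(m - 1) - ⌊(m - 1)/p^j⌋`. Writing
`l - 1 = q p^j + r` with `r < p^j`, the contributions of `q` cancel in `∑ v_i(l)`, leaving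
`p^e - p^(e-j) (1 + r)`, and `r` is the number formed by the lowest `j` base-`p` digits of `l - 1`.
-/

lemma cast_w_succ {p : ℕ} (hp : 0 < p) (i m : ℕ) :
    (w p (i + 1) m : ℤ) = ((m - 1) / p ^ i : ℕ) - ((m - 1) / p ^ (i + 1) : ℕ) := by
  have hle : (m - 1) / p ^ (i + 1) ≤ (m - 1) / p ^ i :=
    Nat.div_le_div_left (Nat.pow_le_pow_right hp i.le_succ) (pow_pos hp i)
  rw [w, Nat.add_sub_cancel, Nat.cast_sub hle]

lemma sum_Icc_cast_w {p : ℕ} (hp : 0 < p) (m j : ℕ) :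
    ∑ i ∈ Finset.Icc 1 j, (w p i m : ℤ) = ((m - 1 : ℕ) : ℤ) - ((m - 1) / p ^ j : ℕ) := by
  induction j with
  | zero => simp
  | succ j ih =>
    rw [Finset.sum_Icc_succ_top (Nat.le_add_left 1 j), ih, cast_w_succ hp]
    ring

lemma sum_range_div_pow_mod_mul_pow (p m j : ℕ) :
    ∑ k ∈ Finset.range j, m / p ^ k % p * p ^ k = m % p ^ j := by
  induction j with
  | zero => simp [Nat.mod_one]
  | succ j ih =>
    rw [Finset.sum_range_succ, ih, pow_succ, Nat.mod_mul]
    ring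

lemma pow_sub_one_div_pow {p : ℕ} (hp : 0 < p) {j e : ℕ} (hje : j ≤ e) :
    (p ^ e - 1) / p ^ j = p ^ (e - j) - 1 := by
  have hpj : 0 < p ^ j := pow_pos hp j
  have hsplit : p ^ e - 1 = p ^ j * (p ^ (e - j) - 1) + (p ^ j - 1) := by
    rw [Nat.mul_sub, mul_one, ← pow_add, Nat.add_sub_cancel' hje]
    have : p ^ j ≤ p ^ e := Nat.pow_le_pow_right hp hje
    omega
  rw [hsplit, Nat.mul_add_div hpj, Nat.div_eq_of_lt (by omega), add_zero]

lemma sum_Icc_v {p e l j : ℕ} (hp : 0 < p) (hl : 1 ≤ l) (hje : j ≤ e) :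
    ∑ i ∈ Finset.Icc 1 j, v p e i l =
      (p : ℤ) ^ e - (p : ℤ) ^ (e - j) * (1 + ((l - 1) % p ^ j : ℕ)) := by
  simp only [v, Finset.sum_sub_distrib, ← Finset.mul_sum]
  rw [sum_Icc_cast_w hp, sum_Icc_cast_w hp, pow_sub_one_div_pow hp hje]
  have hdiv : ((l - 1 : ℕ) : ℤ) = (p : ℤ) ^ j * ((l - 1) / p ^ j : ℕ) + ((l - 1) % p ^ j : ℕ) := by
    exact_mod_cast (Nat.div_add_mod (l - 1) (p ^ j)).symm
  generalize (l - 1) / p ^ j = q at hdiv ⊢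
  generalize (l - 1) % p ^ j = r at hdiv ⊢
  have hpow : (p : ℤ) ^ e = (p : ℤ) ^ (e - j) * (p : ℤ) ^ j := by
    rw [← pow_add, Nat.sub_add_cancel hje]
  push_cast [Nat.cast_sub hl, Nat.cast_sub (Nat.one_le_pow _ _ hp)] at hdiv ⊢
  rw [hpow]
  linear_combination (-(p : ℤ) ^ (e - j)) * hdiv

theorem stmt2_general (p e l j : ℕ) (hp : 2 ≤ p) (hl2 : 2 ≤ l) (hje : j ≤ e) :
    (∑ i ∈ Finset.Icc 1 j, v p e i l) =
      (p : ℤ) ^ e - (p : ℤ) ^ (e - j) *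
        (1 + ∑ k ∈ Finset.range j, (((l - 1) / p ^ k % p : ℕ) : ℤ) * (p : ℤ) ^ k) ∧
    0 ≤ ∑ i ∈ Finset.Icc 1 j, v p e i l := by
  have hp0 : 0 < p := by omega
  have hdigits : ∑ k ∈ Finset.range j, (((l - 1) / p ^ k % p : ℕ) : ℤ) * (p : ℤ) ^ k =
      ((l - 1) % p ^ j : ℕ) := by
    exact_mod_cast sum_range_div_pow_mod_mul_pow p (l - 1) j
  have hmod : (((l - 1) % p ^ j : ℕ) : ℤ) + 1 ≤ (p : ℤ) ^ j := by
    exact_mod_cast Nat.mod_lt _ (pow_pos hp0 j)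
  rw [hdigits, sum_Icc_v hp0 (by omega) hje]
  refine ⟨rfl, ?_⟩
  calc (0 : ℤ) = (p : ℤ) ^ e - (p : ℤ) ^ (e - j) * (p : ℤ) ^ j := by
        rw [← pow_add, Nat.sub_add_cancel hje, sub_self]
    _ ≤ _ := by gcongr; linarith

theorem stmt2 (p e l j : ℕ) (hp : 2 ≤ p) (he : 1 ≤ e) (hl2 : 2 ≤ l) (hl : l ≤ p ^ e)
    (hj1 : 1 ≤ j) (hje : j ≤ e) :
    (∑ i ∈ Finset.Icc 1 j, v p e i l) =
      (p : ℤ) ^ e - (p : ℤ) ^ (e - j) *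
        (1 + ∑ k ∈ Finset.range j, (((l - 1) / p ^ k % p : ℕ) : ℤ) * (p : ℤ) ^ k) ∧
    0 ≤ ∑ i ∈ Finset.Icc 1 j, v p e i l :=
  stmt2_general p e l j hp hl2 hje
end

section
/- Let p be a prime, e ≥ 1, r : {1,…,e} → ℕ nonincreasing with r_e ≥ 1, and let 0 ≤ f ≤ e be minimal such that r_i = 1 for all i > f (i.e. p^f G is cyclic). With ε(l) defined as before, ε(l) = 0 if and only if p^f divides l, for 2 ≤ l ≤ p^e. -/
/-!
Abel summation, with `r (e + 1) := 1`, turns `1 + ∑ rᵢ wᵢ(l)` into `l + ∑ (rᵢ - rᵢ₊₁) (l - ⌈l / pⁱ⌉)`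
(the floors telescope), so that
`ε(l) = ∑ᵢ (rᵢ - rᵢ₊₁) (⌈l / pⁱ⌉ / l - p⁻ⁱ)`.
Both factors are nonnegative; the first vanishes for `i > f` and not at `i = f`, the second
vanishes exactly when `pⁱ ∣ l`.
-/

open Finset

theorem sum_Icc_mul_sub_eq_by_parts {R : Type*} [CommRing R] (a q : ℕ → R) (n : ℕ) :
    ∑ i ∈ Icc 1 n, a i * (q (i - 1) - q i) =
      ∑ i ∈ Icc 1 n, (a i - a (i + 1)) * (q 0 - q i) + a (n + 1) * (q 0 - q n) := by
  induction n with
  | zero => simp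
  | succ n ih =>
    rw [sum_Icc_succ_top (by omega), sum_Icc_succ_top (by omega), ih, Nat.add_sub_cancel]
    ring

theorem cast_w {R : Type*} [AddGroupWithOne R] {p : ℕ} (hp : 0 < p) (i m : ℕ) :
    (w p i m : R) = ((m - 1) / p ^ (i - 1) : ℕ) - ((m - 1) / p ^ i : ℕ) :=
  Nat.cast_sub <| Nat.div_le_div_left (Nat.pow_le_pow_right hp (Nat.sub_le i 1)) (by positivity)

/-- `⌈l / b⌉ / l`, with `⌈l / b⌉` written as `(l - 1) / b + 1`. -/
def ceilFrac (b l : ℕ) : ℚ := (((l - 1) / b + 1 : ℕ) : ℚ) / l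

theorem le_mul_sub_one_div_add_one (b l : ℕ) (hb : 0 < b) : l ≤ b * ((l - 1) / b + 1) := by
  have := Nat.lt_mul_div_succ (l - 1) hb
  omega

theorem mul_sub_one_div_add_one_eq_iff {b l : ℕ} (hb : 0 < b) (hl : 0 < l) :
    b * ((l - 1) / b + 1) = l ↔ b ∣ l := by
  refine ⟨fun h => ⟨_, h.symm⟩, fun ⟨k, hk⟩ => ?_⟩
  obtain ⟨j, rfl⟩ : ∃ j, k = j + 1 := ⟨k - 1, by subst hk; have := Nat.pos_of_mul_pos_left hl; omega⟩
  have : l - 1 = b * j + (b - 1) := by rw [hk, mul_add]; omega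
  rw [this, Nat.mul_add_div hb, Nat.div_eq_of_lt (by omega), hk]

theorem inv_le_ceilFrac {b l : ℕ} (hb : 0 < b) (hl : 0 < l) : (b : ℚ)⁻¹ ≤ ceilFrac b l := by
  rw [ceilFrac, inv_le_iff_one_le_mul₀ (by positivity), div_mul_eq_mul_div, one_le_div (by positivity)]
  exact_mod_cast (le_mul_sub_one_div_add_one b l hb).trans_eq (mul_comm _ _)

theorem ceilFrac_eq_inv_iff {b l : ℕ} (hb : 0 < b) (hl : 0 < l) :
    ceilFrac b l = (b : ℚ)⁻¹ ↔ b ∣ l := by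
  rw [← mul_sub_one_div_add_one_eq_iff hb hl, ceilFrac, div_eq_iff (by positivity),
    inv_mul_eq_div, eq_div_iff (by positivity), mul_comm]
  exact_mod_cast Iff.rfl

theorem one_add_sum_mul_w_div {p e l : ℕ} (hp : 0 < p) (hl : 0 < l) (hle : l ≤ p ^ e)
    (a : ℕ → ℚ) (ha : a (e + 1) = 1) :
    (1 + ∑ i ∈ Icc 1 e, a i * w p i l) / l =
      1 + ∑ i ∈ Icc 1 e, (a i - a (i + 1)) * (1 - ceilFrac (p ^ i) l) := by
  set q : ℕ → ℚ := fun j => (((l - 1) / p ^ j : ℕ) : ℚ)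
  have hq0 : q 0 = l - 1 := by simp [q, Nat.cast_pred hl]
  have hqe : q e = 0 := by simp [q, Nat.div_eq_of_lt (show l - 1 < p ^ e by omega)]
  have hterm (i : ℕ) : (a i - a (i + 1)) * (1 - ceilFrac (p ^ i) l) * l =
      (a i - a (i + 1)) * (q 0 - q i) := by
    rw [hq0, ceilFrac]
    push_cast
    field_simp
    ring
  have hparts := sum_Icc_mul_sub_eq_by_parts a q e
  simp only [cast_w (R := ℚ) hp]
  rw [div_eq_iff (by positivity), add_mul, sum_mul, sum_congr rfl fun i _ => hterm i]
  rw [hparts, hq0, hqe, ha]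
  ring

theorem sub_eq_sum_mul_ceilFrac_sub_inv {p e l : ℕ} (hp : 0 < p) (hl : 0 < l) (hle : l ≤ p ^ e)
    (a : ℕ → ℚ) (ha : a (e + 1) = 1) :
    (1 + ∑ i ∈ Icc 1 e, a i * w p i (p ^ e)) / ((p ^ e : ℕ) : ℚ) -
        (1 + ∑ i ∈ Icc 1 e, a i * w p i l) / l =
      ∑ i ∈ Icc 1 e, (a i - a (i + 1)) * (ceilFrac (p ^ i) l - ((p ^ i : ℕ) : ℚ)⁻¹) := by
  rw [one_add_sum_mul_w_div hp (by positivity) le_rfl a ha, one_add_sum_mul_w_div hp hl hle a ha,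
    add_sub_add_left_eq_sub, ← sum_sub_distrib]
  refine sum_congr rfl fun i hi => ?_
  rw [(ceilFrac_eq_inv_iff (by positivity) (by positivity)).2 (pow_dvd_pow p (mem_Icc.1 hi).2)]
  ring

theorem sum_mul_ceilFrac_sub_inv_eq_zero_iff {p e f l : ℕ} (hp : 0 < p) (hl : 0 < l) (hfe : f ≤ e)
    (a : ℕ → ℚ) (hanti : ∀ i ∈ Icc 1 e, a (i + 1) ≤ a i)
    (hflat : ∀ i, f < i → i ≤ e → a (i + 1) = a i) (hf : 0 < f → a (f + 1) < a f) :
    ∑ i ∈ Icc 1 e, (a i - a (i + 1)) * (ceilFrac (p ^ i) l - ((p ^ i : ℕ) : ℚ)⁻¹) = 0 ↔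
      p ^ f ∣ l := by
  rw [sum_eq_zero_iff_of_nonneg fun i hi => mul_nonneg (sub_nonneg.2 (hanti i hi))
    (sub_nonneg.2 (inv_le_ceilFrac (by positivity) hl))]
  simp only [mul_eq_zero, sub_eq_zero, ceilFrac_eq_inv_iff (pow_pos hp _) hl]
  constructor
  · intro h
    rcases f.eq_zero_or_pos with rfl | hf0
    · simp
    · exact (h f (mem_Icc.2 ⟨hf0, hfe⟩)).resolve_left (hf hf0).ne'
  · intro hdvd i hi
    by_cases hif : i ≤ f
    · exact .inr ((pow_dvd_pow p hif).trans hdvd)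
    · exact .inl (hflat i (by omega) (mem_Icc.1 hi).2).symm

theorem stmt5_general (p e f : ℕ) (hp : p.Prime) (r : ℕ → ℕ)
    (hmono : ∀ i, 1 ≤ i → i < e → r (i + 1) ≤ r i)
    (hfe : f ≤ e)
    (hcyc : ∀ i, f < i → i ≤ e → r i = 1)
    (hmin : f = 0 ∨ 1 < r f) :
    ∀ l, 2 ≤ l → l ≤ p ^ e →
      ((1 + ∑ i ∈ Finset.Icc 1 e, (r i : ℚ) * (w p i (p ^ e) : ℚ)) / (p : ℚ) ^ e
        - (1 + ∑ i ∈ Finset.Icc 1 e, (r i : ℚ) * (w p i l : ℚ)) / (l : ℚ) = 0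
      ↔ p ^ f ∣ l) := by
  intro l hl2 hle
  set ρ : ℕ → ℚ := fun i => if f < i then 1 else r i
  have hρ (m : ℕ) : ∑ i ∈ Icc 1 e, (r i : ℚ) * w p i m = ∑ i ∈ Icc 1 e, ρ i * w p i m :=
    sum_congr rfl fun i hi => by
      by_cases h : f < i
      · simp [ρ, h, hcyc i h (mem_Icc.1 hi).2]
      · simp [ρ, h]
  have hanti : ∀ i ∈ Icc 1 e, ρ (i + 1) ≤ ρ i := by
    intro i hi
    obtain ⟨hi1, -⟩ := mem_Icc.1 hi
    rcases lt_trichotomy i f with hif | rfl | hif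
    · simp only [ρ, if_neg (show ¬f < i by omega), if_neg (show ¬f < i + 1 by omega)]
      exact_mod_cast hmono i hi1 (by omega)
    · simp only [ρ, lt_irrefl, if_false, lt_add_one, if_true]
      exact_mod_cast (hmin.resolve_left (by omega)).le
    · simp [ρ, hif, hif.trans (lt_add_one i)]
  have hflat : ∀ i, f < i → i ≤ e → ρ (i + 1) = ρ i := fun i hi _ => by
    simp [ρ, hi, hi.trans (lt_add_one i)]
  have hf (hf0 : 0 < f) : ρ (f + 1) < ρ f := by
    simp only [ρ, lt_irrefl, if_false, lt_add_one, if_true]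
    exact_mod_cast hmin.resolve_left hf0.ne'
  rw [hρ, hρ, ← Nat.cast_pow,
    sub_eq_sum_mul_ceilFrac_sub_inv hp.pos (by omega) hle ρ (if_pos (by omega))]
  exact sum_mul_ceilFrac_sub_inv_eq_zero_iff hp.pos (by omega) hfe ρ hanti hflat hf

theorem stmt5 (p e f : ℕ) (hp : p.Prime) (he : 1 ≤ e) (r : ℕ → ℕ)
    (hmono : ∀ i, 1 ≤ i → i < e → r (i + 1) ≤ r i)
    (hre : 1 ≤ r e) (hfe : f ≤ e)
    (hcyc : ∀ i, f < i → i ≤ e → r i = 1)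
    (hmin : f = 0 ∨ 1 < r f) :
    ∀ l, 2 ≤ l → l ≤ p ^ e →
      ((1 + ∑ i ∈ Finset.Icc 1 e, (r i : ℚ) * (w p i (p ^ e) : ℚ)) / (p : ℚ) ^ e
        - (1 + ∑ i ∈ Finset.Icc 1 e, (r i : ℚ) * (w p i l : ℚ)) / (l : ℚ) = 0
      ↔ p ^ f ∣ l) :=
  stmt5_general p e f hp r hmono hfe hcyc hmin
end

section
/- Let p be a prime, e ≥ 1, r : {1,…,e} → ℕ nonincreasing with r_e ≥ 1, and α = (1 + ∑_{i=1}^e r_i w_i(p^e))/p^e. For k ≥ 2 and integers 1 ≤ l_1,…,l_k ≤ p^e − 1, define ε(l_1,…,l_k) = α − (1 + ∑_{i=1}^e r_i (w_i(l_1)+⋯+w_i(l_k)))/(l_1+⋯+l_k). Then ε(l_1,…,l_k) > 1/(2p^e). -/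
/-! Write `c_t(m) = ∑_{i ≤ t} w_i(m) = (m - 1) - ⌊(m - 1)/p^t⌋`. For `t ≤ e` one has
`p^e c_t(l) ≤ l c_t(p^e)`, with slack exactly `p^e - l` at `t = e`. Since `r` is nonincreasing,
Abel summation turns these partial-sum inequalities into
`p^e (1 + ∑ r_i w_i(l)) ≤ l (1 + ∑ r_i w_i(p^e))` for `1 ≤ l ≤ p^e`, the slack paying for
the `1`.
Summing over `j` gives the mediant bound `(k + ∑_i r_i ∑_j w_i(l_j)) / ∑ l_j ≤ α`, hence
`ε ≥ (k - 1) / ∑ l_j ≥ (k - 1) / (k (p^e - 1)) > 1 / (2 p^e)`. -/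

open Finset

lemma sum_Icc_w (p l t : ℕ) : ∑ i ∈ Icc 1 t, w p i l = (l - 1) - (l - 1) / p ^ t := by
  induction t with
  | zero => simp
  | succ t ih =>
    rw [sum_Icc_succ_top (by omega), ih]
    have hdiv : (l - 1) / p ^ (t + 1) ≤ (l - 1) / p ^ t := by
      rw [pow_succ, ← Nat.div_div_eq_div_mul]
      exact Nat.div_le_self _ _
    have hle : (l - 1) / p ^ t ≤ l - 1 := Nat.div_le_self _ _
    rw [show w p (t + 1) l = (l - 1) / p ^ t - (l - 1) / p ^ (t + 1) from rfl]
    generalize (l - 1) / p ^ t = a at *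
    generalize (l - 1) / p ^ (t + 1) = b at *
    omega

lemma mul_sub_div_le_succ_mul_pred (m n : ℕ) : n * (m - m / n) ≤ (m + 1) * (n - 1) := by
  rcases Nat.eq_zero_or_pos n with rfl | hn
  · simp
  have hdiv := Nat.div_add_mod m n
  have hmod := Nat.mod_lt m hn
  zify [Nat.div_le_self m n, hn]
  nlinarith

lemma mul_sub_div_le_of_dvd {n N : ℕ} (hnN : n ∣ N) (l : ℕ) :
    N * ((l - 1) - (l - 1) / n) ≤ l * ((N - 1) - (N - 1) / n) := by
  obtain ⟨A, rfl⟩ := hnN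
  rcases Nat.eq_zero_or_pos n with rfl | hn
  · simp
  rcases Nat.eq_zero_or_pos A with rfl | hA
  · simp
  rcases l with _ | m
  · simp
  have hquot : (n * A - 1) / n = A - 1 :=
    Nat.div_eq_of_lt_le (by rw [Nat.sub_mul, one_mul, mul_comm]; omega)
      (by rw [Nat.sub_add_cancel hA, mul_comm]; exact Nat.sub_lt (Nat.mul_pos hA hn) one_pos)
  have hrhs : n * A - 1 - (A - 1) = A * (n - 1) := by
    have hAn : A ≤ n * A := Nat.le_mul_of_pos_left A hn
    zify [hA, hn, hAn, show A - 1 ≤ n * A - 1 by omega, show 1 ≤ n * A by omega]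
    ring
  rw [hquot, hrhs, Nat.add_sub_cancel]
  calc n * A * (m - m / n) = A * (n * (m - m / n)) := by ring
    _ ≤ A * ((m + 1) * (n - 1)) := Nat.mul_le_mul_left A (mul_sub_div_le_succ_mul_pred m n)
    _ = (m + 1) * (A * (n - 1)) := by ring

lemma mul_sum_Icc_le_sum_mul {R : Type*} [Ring R] [PartialOrder R] [IsOrderedRing R]
    (r x : ℕ → R) (e : ℕ) (hr : ∀ i, 1 ≤ i → i < e → r (i + 1) ≤ r i)
    (hx : ∀ t ≤ e, 0 ≤ ∑ i ∈ Icc 1 t, x i) :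
    r e * ∑ i ∈ Icc 1 e, x i ≤ ∑ i ∈ Icc 1 e, r i * x i := by
  induction e with
  | zero => simp
  | succ e ih =>
    have ih := ih (fun i hi hie ↦ hr i hi (by omega)) (fun t ht ↦ hx t (by omega))
    have hre : r (e + 1) * ∑ i ∈ Icc 1 e, x i ≤ r e * ∑ i ∈ Icc 1 e, x i := by
      rcases Nat.eq_zero_or_pos e with rfl | he
      · simp
      exact mul_le_mul_of_nonneg_right (hr e he (by omega)) (hx e (by omega))
    rw [sum_Icc_succ_top (by omega), sum_Icc_succ_top (by omega), mul_add]
    exact add_le_add_left (hre.trans ih) _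

lemma one_div_two_mul_lt_div_sub_div {K : Type*} [Field K] [LinearOrder K] [IsStrictOrderedRing K]
    {P S k T W : K} (hk : 2 ≤ k) (hS : 0 < S) (hSk : S ≤ k * (P - 1))
    (h : P * (k + T) ≤ S * (1 + W)) :
    1 / (2 * P) < (1 + W) / P - (1 + T) / S := by
  have hP : 1 < P := by nlinarith
  have hmediant : (k + T) / S ≤ (1 + W) / P := by
    rw [div_le_div_iff₀ hS (by linarith)]; linarith
  calc 1 / (2 * P) < (k - 1) / (k * (P - 1)) := by
        rw [div_lt_div_iff₀ (by linarith) (by nlinarith)]; nlinarith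
    _ ≤ (k - 1) / S := div_le_div_of_nonneg_left (by linarith) hS hSk
    _ = (k + T) / S - (1 + T) / S := by ring
    _ ≤ (1 + W) / P - (1 + T) / S := by linarith

lemma pow_mul_one_add_sum_w_le (p e : ℕ) (r : ℕ → ℕ)
    (hmono : ∀ i, 1 ≤ i → i < e → r (i + 1) ≤ r i) (hre : 1 ≤ r e)
    {l : ℕ} (hl1 : 1 ≤ l) (hl2 : l ≤ p ^ e) :
    (p : ℚ) ^ e * (1 + ∑ i ∈ Icc 1 e, (r i : ℚ) * w p i l)
      ≤ l * (1 + ∑ i ∈ Icc 1 e, (r i : ℚ) * w p i (p ^ e)) := by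
  set x : ℕ → ℚ := fun i ↦ l * w p i (p ^ e) - p ^ e * w p i l
  have hpartial (t : ℕ) : ∑ i ∈ Icc 1 t, x i
      = l * ((∑ i ∈ Icc 1 t, w p i (p ^ e) : ℕ) : ℚ)
        - p ^ e * ((∑ i ∈ Icc 1 t, w p i l : ℕ) : ℚ) := by
    simp only [x, sum_sub_distrib, mul_sum, Nat.cast_sum]
  have hx : ∀ t ≤ e, 0 ≤ ∑ i ∈ Icc 1 t, x i := by
    intro t ht
    have h := mul_sub_div_le_of_dvd (pow_dvd_pow p ht) l
    rw [← sum_Icc_w, ← sum_Icc_w] at h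
    rw [hpartial, sub_nonneg]
    exact_mod_cast h
  have hxe : ∑ i ∈ Icc 1 e, x i = p ^ e - l := by
    rw [hpartial, sum_Icc_w, sum_Icc_w, Nat.div_eq_of_lt (by omega), Nat.div_eq_of_lt (by omega)]
    push_cast [Nat.sub_zero, Nat.cast_sub hl1, Nat.cast_sub (hl1.trans hl2)]
    ring
  have habel := mul_sum_Icc_le_sum_mul (fun i ↦ (r i : ℚ)) x e
    (fun i hi hie ↦ by exact_mod_cast hmono i hi hie) hx
  have hsum : ∑ i ∈ Icc 1 e, (r i : ℚ) * x i
      = l * ∑ i ∈ Icc 1 e, (r i : ℚ) * w p i (p ^ e)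
        - p ^ e * ∑ i ∈ Icc 1 e, (r i : ℚ) * w p i l := by
    simp only [x, mul_sum, ← sum_sub_distrib]
    exact sum_congr rfl fun i _ ↦ by ring
  have hgap : (0 : ℚ) ≤ p ^ e - l := by rw [sub_nonneg]; exact_mod_cast hl2
  have hslack : (p : ℚ) ^ e - l ≤ r e * (p ^ e - l) :=
    le_mul_of_one_le_left hgap (by exact_mod_cast hre)
  rw [hxe, hsum] at habel
  linarith

theorem stmt7_general (p e : ℕ) (r : ℕ → ℕ)
    (hmono : ∀ i, 1 ≤ i → i < e → r (i + 1) ≤ r i) (hre : 1 ≤ r e)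
    (k : ℕ) (hk : 2 ≤ k) (l : Fin k → ℕ)
    (hl1 : ∀ j, 1 ≤ l j) (hl2 : ∀ j, l j ≤ p ^ e - 1) :
    (1 + ∑ i ∈ Finset.Icc 1 e, (r i : ℚ) * (w p i (p ^ e) : ℚ)) / (p : ℚ) ^ e
      - (1 + ∑ i ∈ Finset.Icc 1 e, (r i : ℚ) * ∑ j, (w p i (l j) : ℚ)) / (∑ j, (l j : ℚ))
      > 1 / (2 * (p : ℚ) ^ e) := by
  have hlP (j : Fin k) : (l j : ℚ) + 1 ≤ p ^ e := by
    exact_mod_cast (show l j + 1 ≤ p ^ e by have := hl1 j; have := hl2 j; omega)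
  have hmediant : (p : ℚ) ^ e * (k + ∑ i ∈ Icc 1 e, (r i : ℚ) * ∑ j, (w p i (l j) : ℚ))
      ≤ (∑ j, (l j : ℚ)) * (1 + ∑ i ∈ Icc 1 e, (r i : ℚ) * w p i (p ^ e)) := by
    calc _ = ∑ j, (p : ℚ) ^ e * (1 + ∑ i ∈ Icc 1 e, (r i : ℚ) * w p i (l j)) := by
          rw [← mul_sum, sum_add_distrib, sum_const, card_univ, Fintype.card_fin, nsmul_one]
          simp only [mul_sum]
          rw [sum_comm]
      _ ≤ _ := by
          rw [sum_mul]
          exact sum_le_sum fun j _ ↦ pow_mul_one_add_sum_w_le p e r hmono hre (hl1 j)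
            (by have := hl2 j; omega)
  refine one_div_two_mul_lt_div_sub_div (by exact_mod_cast hk) ?_ ?_ hmediant
  · exact sum_pos (fun j _ ↦ by exact_mod_cast hl1 j)
      (univ_nonempty_iff.mpr ⟨⟨0, by omega⟩⟩)
  · calc ∑ j, (l j : ℚ) ≤ ∑ _j : Fin k, ((p : ℚ) ^ e - 1) :=
          sum_le_sum fun j _ ↦ by linarith [hlP j]
      _ = k * ((p : ℚ) ^ e - 1) := by rw [sum_const, card_univ, Fintype.card_fin, nsmul_eq_mul]

theorem stmt7 (p e : ℕ) (hp : p.Prime) (he : 1 ≤ e) (r : ℕ → ℕ)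
    (hmono : ∀ i, 1 ≤ i → i < e → r (i + 1) ≤ r i) (hre : 1 ≤ r e)
    (k : ℕ) (hk : 2 ≤ k) (l : Fin k → ℕ)
    (hl1 : ∀ j, 1 ≤ l j) (hl2 : ∀ j, l j ≤ p ^ e - 1) :
    (1 + ∑ i ∈ Finset.Icc 1 e, (r i : ℚ) * (w p i (p ^ e) : ℚ)) / (p : ℚ) ^ e
      - (1 + ∑ i ∈ Finset.Icc 1 e, (r i : ℚ) * ∑ j, (w p i (l j) : ℚ)) / (∑ j, (l j : ℚ))
      > 1 / (2 * (p : ℚ) ^ e) :=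
  stmt7_general p e r hmono hre k hk l hl1 hl2
end

section
/- Let G be a finite abelian p-group of exponent p^e with p^i-ranks r_i(G) = log_p [p^{i-1}G : p^iG], and let H be a subgroup with pG ⊆ H ⊊ G. For a finite abelian p-group A of exponent p^d set α_p(A) = (1 + (p−1)∑_{i=1}^{d} p^{d−i} r_i(A))/p^d. Then α_p(G) − α_p(H) > 1/(2p^e), unless r_e(G) = 1, r_e(H) = 0 and r_i(G) = r_i(H) for all 1 ≤ i ≤ e−1, in which case α_p(G) = α_p(H). -/
/-- The subgroup `n • A` of an additive commutative group `A`. -/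
def nsmulRange (n : ℕ) (A : Type*) [AddCommGroup A] : AddSubgroup A :=
  (AddMonoidHom.mk' (fun a => n • a) (fun a b => smul_add n a b)).range

/-- The `p^i`-rank `r_i(A) = log_p [p^(i-1)A : p^i A]`. -/
noncomputable def rk (p i : ℕ) (A : Type*) [AddCommGroup A] : ℕ :=
  Nat.log p ((nsmulRange (p ^ i) A).relIndex (nsmulRange (p ^ (i - 1)) A))

/-- `α_p(A) = (1 + (p−1) ∑_{i=1}^d p^(d−i) r_i(A)) / p^d` where `p^d` is the exponent of `A`. -/
noncomputable def alphaP (p : ℕ) (A : Type*) [AddCommGroup A] : ℚ :=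
  (1 + ((p : ℚ) - 1) * ∑ i ∈ Finset.Icc 1 (Nat.log p (AddMonoid.exponent A)),
      (p : ℚ) ^ (Nat.log p (AddMonoid.exponent A) - i) * (rk p i A : ℚ)) /
    (p : ℚ) ^ (Nat.log p (AddMonoid.exponent A))

def sHom (n : ℕ) (A : Type*) [AddCommGroup A] : A →+ A :=
  AddMonoidHom.mk' (fun a => n • a) (fun a b => smul_add n a b)

lemma nsmulRange_eq (n : ℕ) (A : Type*) [AddCommGroup A] :
    nsmulRange n A = (sHom n A).range := rfl

@[simp] lemma sHom_apply {A : Type*} [AddCommGroup A] (n : ℕ) (a : A) :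
    sHom n A a = n • a := rfl

lemma mem_nsmulRange {A : Type*} [AddCommGroup A] {n : ℕ} {x : A} :
    x ∈ nsmulRange n A ↔ ∃ a, n • a = x := Iff.rfl

lemma sHom_comp {A : Type*} [AddCommGroup A] (m n : ℕ) :
    (sHom m A).comp (sHom n A) = sHom (n * m) A := by
  ext a
  simp [mul_nsmul]

lemma map_subtype_nsmulRange {G : Type*} [AddCommGroup G] (H : AddSubgroup G) (n : ℕ) :
    (nsmulRange n ↥H).map H.subtype = AddSubgroup.map (sHom n G) H := by
  ext x
  simp only [AddSubgroup.mem_map, mem_nsmulRange, sHom_apply]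
  constructor
  · rintro ⟨y, ⟨a, rfl⟩, rfl⟩
    exact ⟨a, a.2, by push_cast; rfl⟩
  · rintro ⟨g, hg, rfl⟩
    exact ⟨n • (⟨g, hg⟩ : H), ⟨⟨g, hg⟩, rfl⟩, by push_cast; rfl⟩

lemma card_nsmulRange {G : Type*} [AddCommGroup G] (H : AddSubgroup G) (n : ℕ) :
    Nat.card (nsmulRange n ↥H) = Nat.card (AddSubgroup.map (sHom n G) H) := by
  rw [← map_subtype_nsmulRange]
  exact Nat.card_congr
    ((nsmulRange n ↥H).equivMapOfInjective H.subtype H.subtype_injective).toEquiv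

lemma relindex_mul_card' {G : Type*} [AddCommGroup G] [Finite G] {A B : AddSubgroup G}
    (h : B ≤ A) : B.relIndex A * Nat.card B = Nat.card A := by
  have h1 : Nat.card (B.addSubgroupOf A) = Nat.card B :=
    Nat.card_congr (AddSubgroup.addSubgroupOfEquivOfLe h).toEquiv
  have h2 := AddSubgroup.card_mul_index (B.addSubgroupOf A)
  rw [h1] at h2
  rw [mul_comm]
  exact h2

lemma nsmulRange_eq_bot {A : Type*} [AddCommGroup A] {n : ℕ} :
    nsmulRange n A = ⊥ ↔ AddMonoid.exponent A ∣ n := by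
  rw [AddMonoid.exponent_dvd_iff_forall_nsmul_eq_zero]
  constructor
  · intro h a
    have : n • a ∈ nsmulRange n A := ⟨a, rfl⟩
    rwa [h, AddSubgroup.mem_bot] at this
  · intro h
    ext x
    simp only [mem_nsmulRange, AddSubgroup.mem_bot]
    constructor
    · rintro ⟨a, rfl⟩; exact h a
    · rintro rfl; exact ⟨0, by simp⟩

lemma ker_comp_subtype_map {G : Type*} [AddCommGroup G] (φ : G →+ G) (X : AddSubgroup G) :
    (AddMonoidHom.ker (φ.comp X.subtype)).map X.subtype = AddMonoidHom.ker φ ⊓ X := by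
  ext x
  simp only [AddSubgroup.mem_map, AddMonoidHom.mem_ker, AddMonoidHom.coe_comp,
    Function.comp_apply, AddSubgroup.coe_subtype, AddSubgroup.mem_inf]
  constructor
  · rintro ⟨y, hy, rfl⟩; exact ⟨hy, y.2⟩
  · rintro ⟨h1, h2⟩; exact ⟨⟨x, h2⟩, h1, rfl⟩

lemma range_comp_subtype {G : Type*} [AddCommGroup G] (φ : G →+ G) (X : AddSubgroup G) :
    (φ.comp X.subtype).range = X.map φ := by
  ext x
  simp only [AddMonoidHom.mem_range, AddMonoidHom.coe_comp, Function.comp_apply,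
    AddSubgroup.coe_subtype, AddSubgroup.mem_map]
  constructor
  · rintro ⟨y, rfl⟩; exact ⟨y, y.2, rfl⟩
  · rintro ⟨y, hy, rfl⟩; exact ⟨⟨y, hy⟩, rfl⟩

lemma card_eq_ker_mul_map {G : Type*} [AddCommGroup G] [Finite G] (φ : G →+ G)
    (X : AddSubgroup G) :
    Nat.card X = Nat.card (AddMonoidHom.ker φ ⊓ X : AddSubgroup G) * Nat.card (X.map φ) := by
  have h3 := AddSubgroup.card_mul_index (AddMonoidHom.ker (φ.comp X.subtype))
  rw [AddSubgroup.index_ker, range_comp_subtype] at h3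
  have h2 : Nat.card (AddMonoidHom.ker (φ.comp X.subtype)) =
      Nat.card (AddMonoidHom.ker φ ⊓ X : AddSubgroup G) := by
    rw [← ker_comp_subtype_map φ X]
    exact Nat.card_congr
      ((AddMonoidHom.ker (φ.comp X.subtype)).equivMapOfInjective X.subtype
        X.subtype_injective).toEquiv
  rw [← h2, h3]

lemma card_map_dvd {G : Type*} [AddCommGroup G] [Finite G] (φ : G →+ G)
    {A B : AddSubgroup G} (h : B ≤ A) :
    Nat.card (A.map φ) * Nat.card B ∣ Nat.card (B.map φ) * Nat.card A := by
  obtain ⟨t, ht⟩ : Nat.card (AddMonoidHom.ker φ ⊓ B : AddSubgroup G) ∣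
      Nat.card (AddMonoidHom.ker φ ⊓ A : AddSubgroup G) :=
    AddSubgroup.card_dvd_of_le (inf_le_inf_left _ h)
  exact ⟨t, by rw [card_eq_ker_mul_map φ A, card_eq_ker_mul_map φ B, ht]; ring⟩

lemma sum_tel (ν : ℕ → ℕ) (hm : ∀ i, ν (i + 1) ≤ ν i) (n : ℕ) :
    ∑ i ∈ Finset.Icc 1 n, (ν (i - 1) - ν i) = ν 0 - ν n := by
  have hmono : ∀ a b : ℕ, a ≤ b → ν b ≤ ν a := fun a b hab =>
    antitone_nat_of_succ_le hm hab
  induction n with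
  | zero => simp
  | succ n ih =>
    rw [Finset.sum_Icc_succ_top (by omega), ih]
    have h1 := hmono 0 n (by omega)
    have h2 := hm n
    simp only [Nat.add_sub_cancel]
    omega

lemma rk_eq' {A : Type*} [AddCommGroup A] [Finite A] {p : ℕ} (hp : 1 < p) (i : ℕ) (hi : 1 ≤ i)
    {a b : ℕ} (ha : Nat.card (nsmulRange (p ^ (i - 1)) A) = p ^ a)
    (hb : Nat.card (nsmulRange (p ^ i) A) = p ^ b) :
    Nat.log p ((nsmulRange (p ^ i) A).relIndex (nsmulRange (p ^ (i - 1)) A)) = a - b ∧ b ≤ a := by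
  have hle : nsmulRange (p ^ i) A ≤ nsmulRange (p ^ (i - 1)) A := by
    obtain ⟨j, rfl⟩ : ∃ j, i = j + 1 := ⟨i - 1, by omega⟩
    simp only [Nat.add_sub_cancel]
    rintro x ⟨c, rfl⟩
    refine ⟨p • c, ?_⟩
    show p ^ j • p • c = p ^ (j + 1) • c
    rw [← mul_nsmul, pow_succ']
  have h1 := relindex_mul_card' hle
  rw [ha, hb] at h1
  have hba : b ≤ a := by
    refine (Nat.pow_dvd_pow_iff_le_right hp).mp ⟨_, by rw [mul_comm]; exact h1.symm⟩
  have h2 : (nsmulRange (p ^ i) A).relIndex (nsmulRange (p ^ (i - 1)) A) = p ^ (a - b) := by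
    have h3 : p ^ (a - b) * p ^ b = p ^ a := by rw [← pow_add, Nat.sub_add_cancel hba]
    have hpb : 0 < p ^ b := Nat.pow_pos (by omega)
    exact Nat.eq_of_mul_eq_mul_right hpb (by rw [h1, h3])
  rw [h2, Nat.log_pow hp]
  exact ⟨rfl, hba⟩

lemma card_pow_of_exponent_pow {G : Type*} [AddCommGroup G] [Finite G] {p n : ℕ} (hp : p.Prime)
    (h : AddMonoid.exponent G ∣ p ^ n) : ∃ N, Nat.card G = p ^ N := by
  have h0 : Nat.card G ≠ 0 := Nat.card_pos.ne'
  refine ⟨_, Nat.eq_prime_pow_of_unique_prime_dvd h0 ?_⟩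
  intro d hd hdvd
  haveI : Fact d.Prime := ⟨hd⟩
  obtain ⟨g, hg⟩ := exists_prime_addOrderOf_dvd_card' d hdvd
  have h1 : d ∣ p ^ n := hg ▸ (AddMonoid.addOrder_dvd_exponent g).trans h
  exact (Nat.prime_dvd_prime_iff_eq hd hp).mp (hd.dvd_of_dvd_pow h1)

lemma nsmulRange_one' (A : Type*) [AddCommGroup A] : nsmulRange 1 A = ⊤ := by
  ext x
  simp only [mem_nsmulRange, AddSubgroup.mem_top, iff_true]
  exact ⟨x, one_nsmul x⟩

lemma map_sHom_one {G : Type*} [AddCommGroup G] (H : AddSubgroup G) :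
    AddSubgroup.map (sHom 1 G) H = H := by
  ext x
  simp only [AddSubgroup.mem_map, sHom_apply, one_nsmul]
  exact ⟨fun ⟨y, hy, h⟩ => h ▸ hy, fun h => ⟨x, h, rfl⟩⟩


theorem stmt9 (p e : ℕ) (hp : p.Prime) (he : 1 ≤ e) (G : Type*) [AddCommGroup G] [Finite G]
    (hexp : AddMonoid.exponent G = p ^ e)
    (H : AddSubgroup G) (hpG : nsmulRange p G ≤ H) (hne : H ≠ ⊤) :
    ((rk p e G = 1 ∧ rk p e ↥H = 0 ∧ ∀ i ∈ Finset.Icc 1 (e - 1), rk p i G = rk p i ↥H) →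
        alphaP p G = alphaP p ↥H) ∧
    (¬(rk p e G = 1 ∧ rk p e ↥H = 0 ∧ ∀ i ∈ Finset.Icc 1 (e - 1), rk p i G = rk p i ↥H) →
        alphaP p G - alphaP p ↥H > 1 / (2 * (p : ℚ) ^ e)) := by
  have hp1 : 1 < p := hp.one_lt
  obtain ⟨e', rfl⟩ : ∃ e', e = e' + 1 := ⟨e - 1, by omega⟩
  have hpowone : ∀ k : ℕ, p ^ k = 1 → k = 0 := by
    intro k hk
    by_contra hk0
    have := Nat.one_lt_pow hk0 hp1
    omega
  -- `p`-power cards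
  obtain ⟨N, hN⟩ : ∃ N, Nat.card G = p ^ N :=
    card_pow_of_exponent_pow hp (n := e' + 1) (by rw [hexp])
  have ppow : ∀ K : AddSubgroup G, ∃ k, Nat.card K = p ^ k := by
    intro K
    have h1 : Nat.card K ∣ p ^ N := hN ▸ AddSubgroup.card_addSubgroup_dvd_card K
    obtain ⟨k, -, hk⟩ := (Nat.dvd_prime_pow hp).mp h1
    exact ⟨k, hk⟩
  choose ν hν using fun i => ppow (nsmulRange (p ^ i) G)
  choose μ hμ0 using fun i => ppow (AddSubgroup.map (sHom (p ^ i) G) H)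
  have hμ : ∀ i, Nat.card (nsmulRange (p ^ i) ↥H) = p ^ μ i := fun i =>
    (card_nsmulRange H (p ^ i)).trans (hμ0 i)
  have pow_le : ∀ {a b : ℕ}, p ^ a ∣ p ^ b → a ≤ b := fun h =>
    (Nat.pow_dvd_pow_iff_le_right hp1).mp h
  -- subgroup inclusions in `G`
  have hQP : ∀ i, AddSubgroup.map (sHom (p ^ i) G) H ≤ nsmulRange (p ^ i) G := by
    intro i
    rintro x ⟨y, hy, rfl⟩
    exact ⟨y, rfl⟩
  have hPQ : ∀ i, nsmulRange (p ^ (i + 1)) G ≤ AddSubgroup.map (sHom (p ^ i) G) H := by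
    intro i
    rintro x ⟨a, rfl⟩
    refine ⟨p • a, hpG ⟨a, rfl⟩, ?_⟩
    show p ^ i • p • a = p ^ (i + 1) • a
    rw [← mul_nsmul, pow_succ']
  have hPstep : ∀ i, AddSubgroup.map (sHom p G) (nsmulRange (p ^ i) G)
      = nsmulRange (p ^ (i + 1)) G := by
    intro i
    rw [nsmulRange_eq, AddMonoidHom.range_eq_map, AddSubgroup.map_map, sHom_comp,
      nsmulRange_eq (p ^ (i + 1)), AddMonoidHom.range_eq_map, ← pow_succ]
  have hQstep : ∀ i, AddSubgroup.map (sHom p G) (AddSubgroup.map (sHom (p ^ i) G) H)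
      = AddSubgroup.map (sHom (p ^ (i + 1)) G) H := by
    intro i
    rw [AddSubgroup.map_map, sHom_comp, ← pow_succ]
  -- numeric inequalities
  have hμν : ∀ i, μ i ≤ ν i := by
    intro i
    refine pow_le ?_
    rw [← hν i, ← hμ0 i]
    exact AddSubgroup.card_dvd_of_le (hQP i)
  have hνμ : ∀ i, ν (i + 1) ≤ μ i := by
    intro i
    refine pow_le ?_
    rw [← hν (i + 1), ← hμ0 i]
    exact AddSubgroup.card_dvd_of_le (hPQ i)
  have hνν : ∀ i, ν (i + 1) ≤ ν i := fun i => (hνμ i).trans (hμν i)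
  have hμμ : ∀ i, μ (i + 1) ≤ μ i := by
    intro i
    refine pow_le ?_
    rw [← hμ0 (i + 1), ← hμ0 i]
    refine AddSubgroup.card_dvd_of_le ?_
    rintro x ⟨y, hy, rfl⟩
    refine ⟨p • y, H.nsmul_mem hy p, ?_⟩
    show p ^ i • p • y = p ^ (i + 1) • y
    rw [← mul_nsmul, pow_succ']
  have hkey : ∀ i, ν (i + 1) + μ i ≤ μ (i + 1) + ν i := by
    intro i
    refine pow_le ?_
    rw [pow_add, pow_add, ← hν (i + 1), ← hμ0 i, ← hμ0 (i + 1), ← hν i]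
    have h := card_map_dvd (sHom p G) (hQP i)
    rwa [hPstep i, hQstep i] at h
  -- exponent facts
  have hGdvd : AddMonoid.exponent G ∣ p ^ (e' + 1) := by rw [hexp]
  have hexpdvd : AddMonoid.exponent ↥H ∣ p ^ (e' + 1) := by
    rw [AddMonoid.exponent_dvd_iff_forall_nsmul_eq_zero]
    intro x
    have h1 : p ^ (e' + 1) • (x : G) = 0 :=
      AddMonoid.exponent_dvd_iff_forall_nsmul_eq_zero.mp hGdvd (x : G)
    exact Subtype.ext h1
  obtain ⟨d, hdle, hdH⟩ := (Nat.dvd_prime_pow hp).mp hexpdvd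
  have hlogH : Nat.log p (AddMonoid.exponent ↥H) = d := by rw [hdH, Nat.log_pow hp1]
  have hlogG : Nat.log p (AddMonoid.exponent G) = e' + 1 := by rw [hexp, Nat.log_pow hp1]
  have hμzero : ∀ i, (μ i = 0 ↔ d ≤ i) := by
    intro i
    have h1 : Nat.card (nsmulRange (p ^ i) ↥H) = 1 ↔ AddMonoid.exponent ↥H ∣ p ^ i := by
      rw [AddSubgroup.card_eq_one, nsmulRange_eq_bot]
    rw [hμ i, hdH] at h1
    constructor
    · intro h0
      exact pow_le (h1.mp (by rw [h0, pow_zero]))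
    · intro hdi
      exact hpowone _ (h1.mpr (pow_dvd_pow p hdi))
  have hνzero : ∀ i, (ν i = 0 ↔ e' + 1 ≤ i) := by
    intro i
    have h1 : Nat.card (nsmulRange (p ^ i) G) = 1 ↔ AddMonoid.exponent G ∣ p ^ i := by
      rw [AddSubgroup.card_eq_one, nsmulRange_eq_bot]
    rw [hν i, hexp] at h1
    constructor
    · intro h0
      exact pow_le (h1.mp (by rw [h0, pow_zero]))
    · intro hdi
      exact hpowone _ (h1.mpr (pow_dvd_pow p hdi))
  have hνe : ν (e' + 1) = 0 := (hνzero _).mpr le_rfl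
  have hνe' : 1 ≤ ν e' := by have := hνzero e'; omega
  have hμetop : μ (e' + 1) = 0 := by have h1 := hμν (e' + 1); omega
  have hμ0ν0 : μ 0 < ν 0 := by
    have hle := hμν 0
    rcases lt_or_eq_of_le hle with h | h
    · exact h
    · exfalso
      apply hne
      apply AddSubgroup.eq_top_of_card_eq
      have hH0 : Nat.card ↥H = p ^ μ 0 := by
        have h2 := hμ0 0; rwa [pow_zero, map_sHom_one] at h2
      have hG0 : Nat.card G = p ^ ν 0 := by
        have h2 := hν 0
        rw [pow_zero, nsmulRange_one'] at h2
        rwa [Nat.card_congr AddSubgroup.topEquiv.toEquiv] at h2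
      rw [hH0, h, ← hG0]
  -- rk values
  have hrkG : ∀ i, 1 ≤ i → rk p i G = ν (i - 1) - ν i := by
    intro i hi
    unfold rk
    exact (rk_eq' hp1 i hi (hν _) (hν _)).1
  have hrkH : ∀ i, 1 ≤ i → rk p i ↥H = μ (i - 1) - μ i := by
    intro i hi
    unfold rk
    exact (rk_eq' hp1 i hi (hμ _) (hμ _)).1
  have hrs : ∀ i, 1 ≤ i → rk p i ↥H ≤ rk p i G := by
    intro i hi
    rw [hrkG i hi, hrkH i hi]
    obtain ⟨j, rfl⟩ : ∃ j, i = j + 1 := ⟨i - 1, by omega⟩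
    simp only [Nat.add_sub_cancel]
    have h1 := hkey j
    have h2 := hμμ j
    have h3 := hνν j
    have h4 := hμν j
    have h5 := hμν (j + 1)
    omega
  have hrkGe : rk p (e' + 1) G = ν e' := by
    rw [hrkG (e' + 1) (by omega)]
    simp only [Nat.add_sub_cancel]
    omega
  have hrkHe : rk p (e' + 1) ↥H = μ e' := by
    rw [hrkH (e' + 1) (by omega)]
    simp only [Nat.add_sub_cancel]
    omega
  -- telescoping sums
  have hsumR : ∑ i ∈ Finset.Icc 1 (e' + 1), rk p i G = ν 0 := by
    rw [Finset.sum_congr rfl (fun i hi => hrkG i (Finset.mem_Icc.mp hi).1),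
      sum_tel ν hνν, hνe, Nat.sub_zero]
  have hsumS : ∑ i ∈ Finset.Icc 1 (e' + 1), rk p i ↥H = μ 0 := by
    rw [Finset.sum_congr rfl (fun i hi => hrkH i (Finset.mem_Icc.mp hi).1),
      sum_tel μ hμμ, hμetop, Nat.sub_zero]
  -- weighted sums
  set SG := ∑ i ∈ Finset.Icc 1 (e' + 1), p ^ (e' + 1 - i) * rk p i G with hSGdef
  set SH := ∑ i ∈ Finset.Icc 1 (e' + 1), p ^ (e' + 1 - i) * rk p i ↥H with hSHdef
  set TH := ∑ i ∈ Finset.Icc 1 e', p ^ (e' - i) * rk p i ↥H with hTHdef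
  have hW : SH + ν 0 ≤ SG + μ 0 := by
    have hterm : ∀ i ∈ Finset.Icc 1 (e' + 1),
        p ^ (e' + 1 - i) * rk p i ↥H + rk p i G
          ≤ p ^ (e' + 1 - i) * rk p i G + rk p i ↥H := by
      intro i hi
      have h1 := hrs i (Finset.mem_Icc.mp hi).1
      have h3 : p ^ (e' + 1 - i) * rk p i ↥H ≤ p ^ (e' + 1 - i) * rk p i G :=
        Nat.mul_le_mul_left _ h1
      have h4 : rk p i G - rk p i ↥H ≤ p ^ (e' + 1 - i) * (rk p i G - rk p i ↥H) :=
        Nat.le_mul_of_pos_left _ (Nat.pow_pos (by omega))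
      have h5 : p ^ (e' + 1 - i) * (rk p i G - rk p i ↥H)
          = p ^ (e' + 1 - i) * rk p i G - p ^ (e' + 1 - i) * rk p i ↥H := Nat.mul_sub _ _ _
      omega
    have h := Finset.sum_le_sum hterm
    rw [Finset.sum_add_distrib, Finset.sum_add_distrib, hsumR, hsumS] at h
    exact h
  -- alpha expressions
  have hq0 : (p : ℚ) ≠ 0 := by
    have := hp.pos
    positivity
  have hq2 : (2 : ℚ) ≤ (p : ℚ) := by exact_mod_cast hp.two_le
  have hcastSG : (SG : ℚ)
      = ∑ i ∈ Finset.Icc 1 (e' + 1), (p : ℚ) ^ (e' + 1 - i) * (rk p i G : ℚ) := by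
    rw [hSGdef]; push_cast; rfl
  have hcastSH : (SH : ℚ)
      = ∑ i ∈ Finset.Icc 1 (e' + 1), (p : ℚ) ^ (e' + 1 - i) * (rk p i ↥H : ℚ) := by
    rw [hSHdef]; push_cast; rfl
  have hcastTH : (TH : ℚ)
      = ∑ i ∈ Finset.Icc 1 e', (p : ℚ) ^ (e' - i) * (rk p i ↥H : ℚ) := by
    rw [hTHdef]; push_cast; rfl
  have hαG : alphaP p G = (1 + ((p : ℚ) - 1) * (SG : ℚ)) / (p : ℚ) ^ (e' + 1) := by
    unfold alphaP
    rw [hlogG, ← hcastSG]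
  by_cases hcase : μ e' = 0
  · -- exponent of H is p ^ e'
    have hd : d = e' := by
      have h1 : d ≤ e' := (hμzero e').mp hcase
      rcases Nat.eq_zero_or_pos e' with rfl | hpos
      · omega
      · have h2 : ν (e' - 1 + 1) ≤ μ (e' - 1) := hνμ (e' - 1)
        have h3 : e' - 1 + 1 = e' := by omega
        rw [h3] at h2
        have h4 := hμzero (e' - 1)
        omega
    have hμe0 : rk p (e' + 1) ↥H = 0 := by rw [hrkHe]; exact hcase
    have hαH : alphaP p ↥H = (1 + ((p : ℚ) - 1) * (TH : ℚ)) / (p : ℚ) ^ e' := by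
      unfold alphaP
      rw [hlogH, hd, ← hcastTH]
    have hsplitG : SG = (∑ i ∈ Finset.Icc 1 e', p ^ (e' + 1 - i) * rk p i G)
        + rk p (e' + 1) G := by
      rw [hSGdef, Finset.sum_Icc_succ_top (by omega)]
      simp
    have hpTH : p * TH = ∑ i ∈ Finset.Icc 1 e', p ^ (e' + 1 - i) * rk p i ↥H := by
      rw [hTHdef, Finset.mul_sum]
      refine Finset.sum_congr rfl ?_
      intro i hi
      obtain ⟨hi1, hi2⟩ := Finset.mem_Icc.mp hi
      rw [← mul_assoc, ← pow_succ']
      congr 2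
      omega
    constructor
    · rintro ⟨h1, -, h3⟩
      have h3' : ∀ i ∈ Finset.Icc 1 e', rk p i G = rk p i ↥H := by
        intro i hi; exact h3 i (by simpa using hi)
      have hEq : SG = p * TH + 1 := by
        rw [hsplitG, h1, hpTH]
        congr 1
        exact Finset.sum_congr rfl fun i hi => congrArg _ (h3' i hi)
      show alphaP p G = alphaP p ↥H
      rw [hαG, hαH]
      have hc : (SG : ℚ) = (p : ℚ) * (TH : ℚ) + 1 := by exact_mod_cast hEq
      rw [hc, pow_succ]
      field_simp
      ring
    · intro hneg
      have hge1 : 1 ≤ rk p (e' + 1) G := by rw [hrkGe]; exact hνe'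
      have hWsum : ∑ i ∈ Finset.Icc 1 e', p ^ (e' + 1 - i) * rk p i ↥H
          ≤ ∑ i ∈ Finset.Icc 1 e', p ^ (e' + 1 - i) * rk p i G :=
        Finset.sum_le_sum fun i hi => Nat.mul_le_mul_left _ (hrs i (Finset.mem_Icc.mp hi).1)
      have hKey : p * TH + 2 ≤ SG := by
        by_cases h1 : rk p (e' + 1) G = 1
        · have hex : ∃ i ∈ Finset.Icc 1 e', rk p i G ≠ rk p i ↥H := by
            by_contra hall
            push_neg at hall
            exact hneg ⟨h1, hμe0, fun i hi => hall i (by simpa using hi)⟩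
          obtain ⟨i₀, hi₀, hne₀⟩ := hex
          have hstrict : ∑ i ∈ Finset.Icc 1 e', p ^ (e' + 1 - i) * rk p i ↥H
              < ∑ i ∈ Finset.Icc 1 e', p ^ (e' + 1 - i) * rk p i G := by
            refine Finset.sum_lt_sum
              (fun i hi => Nat.mul_le_mul_left _ (hrs i (Finset.mem_Icc.mp hi).1))
              ⟨i₀, hi₀, ?_⟩
            have hs := hrs i₀ (Finset.mem_Icc.mp hi₀).1
            have h6 : rk p i₀ ↥H < rk p i₀ G := by omega
            exact mul_lt_mul_of_pos_left h6 (Nat.pow_pos (by omega))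
          rw [hsplitG, hpTH]
          omega
        · have h2 : 2 ≤ rk p (e' + 1) G := by omega
          rw [hsplitG, hpTH]
          omega
      rw [hαG, hαH, gt_iff_lt]
      have hc : (p : ℚ) * (TH : ℚ) + 2 ≤ (SG : ℚ) := by exact_mod_cast hKey
      have hiden : (1 + ((p : ℚ) - 1) * (SG : ℚ)) / (p : ℚ) ^ (e' + 1)
          - (1 + ((p : ℚ) - 1) * (TH : ℚ)) / (p : ℚ) ^ e'
          = (((p : ℚ) - 1) * ((SG : ℚ) - (p : ℚ) * (TH : ℚ) - 1)) / (p : ℚ) ^ (e' + 1) := by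
        rw [pow_succ]
        have hXne : (p : ℚ) ^ e' ≠ 0 := by positivity
        field_simp
        ring
      have hqpos : (0 : ℚ) < p := by linarith
      have hX : (0 : ℚ) < (p : ℚ) ^ (e' + 1) := pow_pos hqpos _
      rw [hiden, div_lt_div_iff₀ (by linarith) hX]
      have h1 : (1 : ℚ) ≤ ((p : ℚ) - 1) * ((SG : ℚ) - (p : ℚ) * (TH : ℚ) - 1) := by
        have h2 : (1 : ℚ) * 1 ≤ ((p : ℚ) - 1) * ((SG : ℚ) - (p : ℚ) * (TH : ℚ) - 1) :=
          mul_le_mul (by linarith) (by linarith) (by norm_num) (by linarith)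
        linarith
      have h2 : (1 : ℚ) * (2 * (p : ℚ) ^ (e' + 1))
          ≤ ((p : ℚ) - 1) * ((SG : ℚ) - (p : ℚ) * (TH : ℚ) - 1) * (2 * (p : ℚ) ^ (e' + 1)) :=
        mul_le_mul_of_nonneg_right h1 (by linarith)
      linarith
  · -- exponent of H is p ^ (e' + 1)
    have hd : d = e' + 1 := by have := hμzero e'; omega
    have hαH : alphaP p ↥H = (1 + ((p : ℚ) - 1) * (SH : ℚ)) / (p : ℚ) ^ (e' + 1) := by
      unfold alphaP
      rw [hlogH, hd, ← hcastSH]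
    have hKey : SH + 1 ≤ SG := by omega
    constructor
    · rintro ⟨-, h2, -⟩
      rw [hrkHe] at h2
      exact absurd h2 hcase
    · intro _
      have hqpos : (0 : ℚ) < p := by linarith
      have hX : (0 : ℚ) < (p : ℚ) ^ (e' + 1) := pow_pos hqpos _
      have hc : (SH : ℚ) + 1 ≤ (SG : ℚ) := by exact_mod_cast hKey
      rw [hαG, hαH, gt_iff_lt, div_sub_div_same, div_lt_div_iff₀ (by linarith) hX]
      have h1 : (1 : ℚ) ≤ (1 + ((p : ℚ) - 1) * (SG : ℚ)) - (1 + ((p : ℚ) - 1) * (SH : ℚ)) := by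
        have h3 : (1 + ((p : ℚ) - 1) * (SG : ℚ)) - (1 + ((p : ℚ) - 1) * (SH : ℚ))
            = ((p : ℚ) - 1) * ((SG : ℚ) - (SH : ℚ)) := by ring
        have h2 : (1 : ℚ) * 1 ≤ ((p : ℚ) - 1) * ((SG : ℚ) - (SH : ℚ)) :=
          mul_le_mul (by linarith) (by linarith) (by norm_num) (by linarith)
        rw [h3]
        linarith
      have h2 : (1 : ℚ) * (2 * (p : ℚ) ^ (e' + 1))
          ≤ ((1 + ((p : ℚ) - 1) * (SG : ℚ)) - (1 + ((p : ℚ) - 1) * (SH : ℚ)))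
            * (2 * (p : ℚ) ^ (e' + 1)) :=
        mul_le_mul_of_nonneg_right h1 (by linarith)
      linarith
end

section
/- For a finite abelian group A and prime p, define the signature r_i(A) = log_p [p^{i-1}A : p^iA] for i ≥ 1. If H is a subgroup of A with pA ⊆ H, then r_i(A) ≥ r_i(H) ≥ r_{i+1}(A) for all i ≥ 1. -/
/-!
Write `A_k = p^k A` and `H_k = p^k H`. Since `pA ≤ H ≤ A`, the chains interlace,
`A_{k+2} ≤ H_{k+1} ≤ A_{k+1} ≤ H_k ≤ A_k`, and multiplication by `p` maps each term onto the
term two steps further down. A homomorphism can only shrink relative indices, so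
`[A_{k+1} : H_{k+1}] ∣ [A_k : H_k]` and `[H_{k+1} : A_{k+2}] ∣ [H_k : A_{k+1}]`.
Multiplicativity of the index in the towers turns these into `[H_k : H_{k+1}] ∣ [A_k : A_{k+1}]`
and `[A_{k+1} : A_{k+2}] ∣ [H_k : H_{k+1}]`, and `Nat.log p` is monotone.
-/

namespace Subgroup

variable {G G' : Type*} [Group G] [Group G']

@[to_additive]
theorem relIndex_map_map_dvd (f : G →* G') (H K : Subgroup G) :
    (H.map f).relIndex (K.map f) ∣ H.relIndex K := by
  rw [← relIndex_comap, comap_map_eq]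
  exact relIndex_dvd_of_le_left K le_sup_left

@[to_additive]
theorem relIndex_dvd_relIndex_of_relIndex_dvd {a b c d : Subgroup G} (hab : a ≤ b) (hbc : b ≤ c)
    (hcd : c ≤ d) (h : a.relIndex b ∣ c.relIndex d) : a.relIndex c ∣ b.relIndex d := by
  rw [← relIndex_mul_relIndex a b c hab hbc, ← relIndex_mul_relIndex b c d hbc hcd,
    mul_comm (b.relIndex c)]
  exact mul_dvd_mul_right h _

end Subgroup

section nsmulRange

variable {G : Type*} [AddCommGroup G]

theorem map_nsmul_nsmulRange (m n : ℕ) :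
    (nsmulRange m G).map (nsmulAddMonoidHom n) = nsmulRange (n * m) G := by
  ext x
  simp [nsmulRange, mul_smul]

theorem map_subtype_nsmulRange_le (H : AddSubgroup G) (n : ℕ) :
    (nsmulRange n H).map H.subtype ≤ nsmulRange n G := by
  rintro _ ⟨_, ⟨h, rfl⟩, rfl⟩
  exact ⟨h, rfl⟩

theorem nsmulRange_mul_le_map_subtype {p : ℕ} {H : AddSubgroup G} (hH : nsmulRange p G ≤ H)
    (n : ℕ) : nsmulRange (n * p) G ≤ (nsmulRange n H).map H.subtype := by
  rintro _ ⟨a, rfl⟩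
  exact ⟨n • ⟨p • a, hH ⟨a, rfl⟩⟩, ⟨_, rfl⟩, (mul_smul n p a).symm⟩

theorem map_nsmul_map_subtype_nsmulRange (H : AddSubgroup G) (m n : ℕ) :
    ((nsmulRange m H).map H.subtype).map (nsmulAddMonoidHom n) =
      (nsmulRange (n * m) H).map H.subtype := by
  rw [← map_nsmul_nsmulRange, AddSubgroup.map_map, AddSubgroup.map_map]
  rfl

theorem rk_succ_eq_log_relIndex_map_subtype (p k : ℕ) (H : AddSubgroup G) :
    rk p (k + 1) H = Nat.log p (((nsmulRange (p ^ (k + 1)) H).map H.subtype).relIndex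
      ((nsmulRange (p ^ k) H).map H.subtype)) := by
  rw [AddSubgroup.relIndex_map_map_of_injective _ _ H.subtype_injective]
  rfl

variable {p : ℕ} {H : AddSubgroup G}

theorem nsmulRange_pow_succ_le_map_subtype (hH : nsmulRange p G ≤ H) (j : ℕ) :
    nsmulRange (p ^ (j + 1)) G ≤ (nsmulRange (p ^ j) H).map H.subtype := by
  rw [pow_succ]
  exact nsmulRange_mul_le_map_subtype hH _

theorem relIndex_map_subtype_nsmulRange_dvd (hH : nsmulRange p G ≤ H) (k : ℕ) :
    ((nsmulRange (p ^ (k + 1)) H).map H.subtype).relIndex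
        ((nsmulRange (p ^ k) H).map H.subtype) ∣
      (nsmulRange (p ^ (k + 1)) G).relIndex (nsmulRange (p ^ k) G) := by
  refine AddSubgroup.relIndex_dvd_relIndex_of_relIndex_dvd (map_subtype_nsmulRange_le H _)
    (nsmulRange_pow_succ_le_map_subtype hH k) (map_subtype_nsmulRange_le H _) ?_
  have := AddSubgroup.relIndex_map_map_dvd (nsmulAddMonoidHom p)
    ((nsmulRange (p ^ k) H).map H.subtype) (nsmulRange (p ^ k) G)
  rwa [map_nsmul_map_subtype_nsmulRange, map_nsmul_nsmulRange, ← pow_succ'] at this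

theorem relIndex_nsmulRange_dvd_map_subtype (hH : nsmulRange p G ≤ H) (k : ℕ) :
    (nsmulRange (p ^ (k + 2)) G).relIndex (nsmulRange (p ^ (k + 1)) G) ∣
      ((nsmulRange (p ^ (k + 1)) H).map H.subtype).relIndex
        ((nsmulRange (p ^ k) H).map H.subtype) := by
  refine AddSubgroup.relIndex_dvd_relIndex_of_relIndex_dvd
    (nsmulRange_pow_succ_le_map_subtype hH _) (map_subtype_nsmulRange_le H _)
    (nsmulRange_pow_succ_le_map_subtype hH k) ?_
  have := AddSubgroup.relIndex_map_map_dvd (nsmulAddMonoidHom p)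
    (nsmulRange (p ^ (k + 1)) G) ((nsmulRange (p ^ k) H).map H.subtype)
  rwa [map_nsmul_map_subtype_nsmulRange, map_nsmul_nsmulRange, ← pow_succ', ← pow_succ'] at this

end nsmulRange

theorem stmt10_general (p : ℕ) (A : Type*) [AddCommGroup A] [Finite A]
    (H : AddSubgroup A) (hpA : nsmulRange p A ≤ H) (i : ℕ) (hi : 1 ≤ i) :
    rk p i ↥H ≤ rk p i A ∧ rk p (i + 1) A ≤ rk p i ↥H := by
  obtain ⟨k, rfl⟩ : ∃ k, i = k + 1 := ⟨i - 1, by omega⟩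
  rw [rk_succ_eq_log_relIndex_map_subtype]
  have index_pos {K L : AddSubgroup A} : 0 < K.relIndex L :=
    Nat.pos_of_ne_zero AddSubgroup.FiniteIndex.index_ne_zero
  exact ⟨Nat.log_mono_right <|
      Nat.le_of_dvd index_pos (relIndex_map_subtype_nsmulRange_dvd hpA k),
    Nat.log_mono_right <| Nat.le_of_dvd index_pos (relIndex_nsmulRange_dvd_map_subtype hpA k)⟩

theorem stmt10 (p : ℕ) (hp : p.Prime) (A : Type*) [AddCommGroup A] [Finite A]
    (hpgrp : ∃ n, Nat.card A = p ^ n)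
    (H : AddSubgroup A) (hpA : nsmulRange p A ≤ H) (i : ℕ) (hi : 1 ≤ i) :
    rk p i ↥H ≤ rk p i A ∧ rk p (i + 1) A ≤ rk p i ↥H :=
  stmt10_general p A H hpA i hi
end
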